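/- arXiv:1006.4153 — 5 statements merged into one kernel-verified Lean document; each statement's English description precedes it below -/
import Mathlib

section
/- Let B, B′, and U be additive abelian groups and let f : U → B and g : U → B′ be group homomorphisms. Let N be the subgroup of B × B′ generated by the elements (f(u), −g(u)) for u ∈ U. If f is injective, then the homomorphism B′ → (B × B′)/N sending b′ to the class of (0, b′) is injective. -/
theorem AddMonoidHom.closure_setOf_eq_range_prod_neg {B B' U : Type*} [AddGroup B]
    [AddCommGroup B'] [AddGroup U] (f : U →+ B) (g : U →+ B') :
    AddSubgroup.closure {x : B × B' | ∃ u : U, x = (f u, -g u)} = (f.prod (-g)).range := by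
  rw [← AddSubgroup.closure_eq (f.prod (-g)).range, AddMonoidHom.coe_range]
  congr 1
  ext x
  simp [eq_comm]

theorem AddMonoidHom.eq_zero_of_zero_mk_mem_range_prod {B B' U : Type*} [AddZeroClass B]
    [AddZeroClass B'] [AddZeroClass U] {f : U →+ B} (hf : Function.Injective f) (g : U →+ B')
    {b' : B'} (h : ((0 : B), b') ∈ Set.range (f.prod g)) : b' = 0 := by
  obtain ⟨u, hu⟩ := h
  obtain ⟨hfu, hgu⟩ := Prod.ext_iff.mp hu
  have hu0 : u = 0 := hf (by simpa using hfu)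
  simpa [hu0] using hgu.symm

/-- For abelian groups `B`, `B'`, `U` and homomorphisms `f : U → B`, `g : U → B'`,
if `f` is injective then `b' ↦ (0, b')` induces an embedding of `B'` into the
amalgamated sum `(B × B') / N`, where `N` is generated by the `(f u, -g u)`. -/
theorem stmt1 {B B' U : Type*} [AddCommGroup B] [AddCommGroup B'] [AddCommGroup U]
    (f : U →+ B) (g : U →+ B')
    (N : AddSubgroup (B × B'))
    (hN : N = AddSubgroup.closure {x : B × B' | ∃ u : U, x = (f u, -g u)})
    (hf : Function.Injective f) :
    Function.Injective (fun b' : B' => (QuotientAddGroup.mk (0, b') : (B × B') ⧸ N)) := by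
  intro a b hab
  rw [QuotientAddGroup.eq, hN, AddMonoidHom.closure_setOf_eq_range_prod_neg] at hab
  have hdiff : ((0 : B), -a + b) ∈ Set.range (f.prod (-g)) := by simpa using hab
  exact neg_add_eq_zero.mp (AddMonoidHom.eq_zero_of_zero_mk_mem_range_prod hf _ hdiff)
end

section
/- Let U and B be abelian groups and let f, g : U → B be injective group homomorphisms. Then for every ν ∈ ℤ, the map B → P(f, g) sending b to the class of ι_ν(b) is injective; that is, each factor B embeds in the infinite free product with identical amalgamations. -/
/-!
Every relator `ι_ν (f u) - ι_{ν+1} (g u)` is a value of the homomorphism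
`relatorMap f g : ⨁_ℤ U → ⨁_ℤ B`, `(relatorMap f g u)_k = f (u_k) - g (u_{k-1})`, so if `ι_ν b`
lies in the relator subgroup then `ι_ν b = relatorMap f g u` for a finitely supported `u`.
Off the index `ν` this says `f (u_k) = g (u_{k-1})`. Injectivity of `g` propagates the vanishing of
`u` downwards from the top of its support to every `k ≥ ν`, injectivity of `f` propagates it
upwards from the bottom to every `k < ν`; hence `u = 0` and `b = 0`.
-/

open DirectSum

noncomputable section

variable {U B : Type*} [AddCommGroup U] [AddCommGroup B]

/-- The relator subgroup of `⨁_{ν ∈ ℤ} B` generated by the elements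
`ι_ν (f u) - ι_{ν+1} (g u)` for `ν ∈ ℤ`, `u ∈ U`. -/
def relS (f g : U →+ B) : AddSubgroup (⨁ _ : ℤ, B) :=
  AddSubgroup.closure {x | ∃ (ν : ℤ) (u : U),
    x = DirectSum.of (fun _ : ℤ => B) ν (f u) - DirectSum.of (fun _ : ℤ => B) (ν + 1) (g u)}

/-- The infinite free product `⋯ ⊕_U B ⊕_U B ⊕_U ⋯` with identical amalgamations
`B ←g– U –f→ B`: the quotient of `⨁_{ν ∈ ℤ} B` by the relator subgroup. -/
def P (f g : U →+ B) : Type _ := (⨁ _ : ℤ, B) ⧸ relS f g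

instance (f g : U →+ B) : AddCommGroup (P f g) :=
  inferInstanceAs (AddCommGroup ((⨁ _ : ℤ, B) ⧸ relS f g))

namespace DFinsupp

variable {ι M : Type*} [LinearOrder ι] [Zero M]

theorem apply_eq_zero_of_ge (u : Π₀ _ : ι, M) (ν : ι)
    (step : ∀ k, ν ≤ k → (∀ j, k < j → u j = 0) → u k = 0) {k : ι} (hk : ν ≤ k) :
    u k = 0 := by
  classical
  by_contra hk0
  obtain ⟨m, hm, hmax⟩ :=
    (u.support.filter (ν ≤ ·)).exists_max_image id ⟨k, by simp [hk0, hk]⟩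
  simp only [Finset.mem_filter, mem_support_iff] at hm hmax
  refine hm.1 (step m hm.2 fun j hj => ?_)
  by_contra hj0
  exact (hmax j ⟨hj0, hm.2.trans hj.le⟩).not_gt hj

theorem apply_eq_zero_of_le (u : Π₀ _ : ι, M) (ν : ι)
    (step : ∀ k, k ≤ ν → (∀ j, j < k → u j = 0) → u k = 0) {k : ι} (hk : k ≤ ν) :
    u k = 0 :=
  apply_eq_zero_of_ge (ι := ιᵒᵈ) u ν step hk

end DFinsupp

section Relators

def relatorMap (f g : U →+ B) : (⨁ _ : ℤ, U) →+ (⨁ _ : ℤ, B) :=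
  toAddMonoid fun j => (of _ j).comp f - (of _ (j + 1)).comp g

variable {f g : U →+ B}

theorem relatorMap_apply (u : ⨁ _ : ℤ, U) (k : ℤ) :
    relatorMap f g u k = f (u k) - g (u (k - 1)) := by
  induction u using DirectSum.induction_on with
  | zero => simp
  | of j x =>
    simp only [relatorMap, toAddMonoid_of, AddMonoidHom.sub_apply, AddMonoidHom.comp_apply,
      DirectSum.sub_apply, of_apply]
    split_ifs <;> first | omega | simp_all
  | add x y hx hy =>
    simp only [map_add, DirectSum.add_apply, hx, hy]
    abel

theorem relS_le_range_relatorMap : relS f g ≤ (relatorMap f g).range := by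
  refine (AddSubgroup.closure_le _).2 ?_
  rintro _ ⟨j, u, rfl⟩
  exact ⟨of _ j u, toAddMonoid_of _ _ _⟩

theorem eq_zero_of_relatorMap_eq_of (hf : Function.Injective f) (hg : Function.Injective g)
    {u : ⨁ _ : ℤ, U} {ν : ℤ} {b : B} (h : relatorMap f g u = of _ ν b) : u = 0 := by
  have hrel (k : ℤ) (hk : k ≠ ν) : f (u k) = g (u (k - 1)) := by
    have hk' := DFunLike.congr_fun h k
    rw [relatorMap_apply, of_eq_of_ne _ _ _ hk] at hk'
    exact sub_eq_zero.1 hk'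
  have above : ∀ {k}, ν ≤ k → u k = 0 := DFinsupp.apply_eq_zero_of_ge u ν
    fun k hk hgt => (injective_iff_map_eq_zero g).1 hg _ <| by
      rw [← add_sub_cancel_right k 1, ← hrel (k + 1) (by omega), hgt (k + 1) (lt_add_one k),
        map_zero]
  have below : ∀ {k}, k ≤ ν - 1 → u k = 0 := DFinsupp.apply_eq_zero_of_le u (ν - 1)
    fun k hk hlt => (injective_iff_map_eq_zero f).1 hf _ <| by
      rw [hrel k (by omega), hlt (k - 1) (sub_one_lt k), map_zero]
  ext k
  rcases le_or_gt ν k with hk | hk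
  · exact above hk
  · exact below (by omega)

theorem eq_zero_of_of_mem_relS (hf : Function.Injective f) (hg : Function.Injective g)
    {ν : ℤ} {b : B} (hb : of _ ν b ∈ relS f g) : b = 0 := by
  obtain ⟨u, hu⟩ := relS_le_range_relatorMap hb
  obtain rfl := eq_zero_of_relatorMap_eq_of hf hg hu
  have hν := DFunLike.congr_fun hu ν
  rwa [map_zero, DirectSum.zero_apply, of_eq_same, eq_comm] at hν

end Relators

/-- If the amalgamating maps `f, g : U → B` are injective, then each factor `B` embeds
into the infinite free product with identical amalgamations. -/
theorem stmt4 (f g : U →+ B) (hf : Function.Injective f) (hg : Function.Injective g)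
    (ν : ℤ) :
    Function.Injective fun b : B =>
      (QuotientAddGroup.mk (DirectSum.of (fun _ : ℤ => B) ν b) : P f g) :=
  (injective_iff_map_eq_zero ((QuotientAddGroup.mk' (relS f g)).comp (of _ ν))).2
    fun _ hb => eq_zero_of_of_mem_relS hf hg ((QuotientAddGroup.eq_zero_iff _).1 hb)
end
end

section
/- Let f, g : ℤ^d → ℤ^d be injective ℤ-linear maps with matrices F and G, and let Λ = ℤ[t, t⁻¹]. Let N ⊆ Λ^d be the Λ-submodule generated by the columns of the matrix t·G − F (with entries viewed in Λ). Then there is an additive group isomorphism ψ : Λ^d / N ≃ P(f, g) satisfying ψ(t · x) = μ(ψ(x)) for all x ∈ Λ^d / N; in other words, the infinite amalgamated product P(f, g), with t acting as the shift μ, is a Λ-module with square presentation matrix t·G − F. -/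
open DirectSum

noncomputable section

variable {U B : Type*} [AddCommGroup U] [AddCommGroup B]

/-- The reindexing homomorphism of `⨁_{ν ∈ ℤ} B` sending the `ν`-th summand
identically to the `(ν+1)`-st summand. -/
def shiftHom (B : Type*) [AddCommGroup B] : (⨁ _ : ℤ, B) →+ (⨁ _ : ℤ, B) :=
  DirectSum.toAddMonoid fun ν => DirectSum.of (fun _ : ℤ => B) (ν + 1)

theorem relS_le_comap (f g : U →+ B) : relS f g ≤ (relS f g).comap (shiftHom B) := by
  unfold relS
  rw [AddSubgroup.closure_le]
  rintro x ⟨ν, u, rfl⟩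
  have h : shiftHom B (DirectSum.of (fun _ : ℤ => B) ν (f u)
        - DirectSum.of (fun _ : ℤ => B) (ν + 1) (g u))
      = DirectSum.of (fun _ : ℤ => B) (ν + 1) (f u)
        - DirectSum.of (fun _ : ℤ => B) (ν + 1 + 1) (g u) := by
    rw [map_sub]
    unfold shiftHom
    rw [DirectSum.toAddMonoid_of, DirectSum.toAddMonoid_of]
  simp only [SetLike.mem_coe, AddSubgroup.mem_comap, h]
  exact AddSubgroup.subset_closure ⟨ν + 1, u, rfl⟩

/-- The shift `μ` of the infinite free product, induced by the reindexing
homomorphism of `⨁_{ν ∈ ℤ} B`. -/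
def shiftMu (f g : U →+ B) : P f g →+ P f g :=
  QuotientAddGroup.map (relS f g) (relS f g) (shiftHom B) (relS_le_comap f g)

/-!
Sending `ι_ν v` to `t^ν v` identifies `⨁_{ν ∈ ℤ} R^ι` additively with `R[t,t⁻¹]^ι`, and turns the
reindexing shift into multiplication by `t`. The relators `ι_ν (f u) - ι_{ν+1} (g u)` are, up to
sign, the values of the map `ι_ν u ↦ ι_{ν+1} (g u) - ι_ν (f u)`, which under this identification
is multiplication by the matrix `t G - F`. Hence the relator subgroup corresponds to the column
span `N` of `t G - F`, and the two quotients are isomorphic compatibly with `t` and `μ`.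
-/

open LaurentPolynomial
open scoped Matrix

/-- The sign is chosen so that this map becomes multiplication by `t G - F`. -/
def relatorHom (f g : U →+ B) : (⨁ _ : ℤ, U) →+ ⨁ _ : ℤ, B :=
  toAddMonoid fun ν => (of _ (ν + 1)).comp g - (of _ ν).comp f

theorem relS_eq_range_relatorHom (f g : U →+ B) : relS f g = (relatorHom f g).range := by
  apply le_antisymm
  · rw [relS, AddSubgroup.closure_le]
    rintro _ ⟨ν, u, rfl⟩
    exact ⟨of _ ν (-u), by simp [relatorHom]⟩
  · rintro _ ⟨x, rfl⟩
    induction x using DirectSum.induction_on with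
    | zero => simp
    | of ν u =>
      have hgen : relatorHom f g (of _ ν u) = -(of _ ν (f u) - of _ (ν + 1) (g u)) := by
        simp [relatorHom]
      exact hgen ▸ neg_mem (AddSubgroup.subset_closure ⟨ν, u, rfl⟩)
    | add x y hx hy => simpa only [map_add] using add_mem hx hy

section LaurentEquiv

variable (R ι : Type*) [Semiring R]

def toLaurentHom : (⨁ _ : ℤ, ι → R) →+ (ι → R[T;T⁻¹]) :=
  toAddMonoid fun ν => (AddMonoidAlgebra.singleAddHom ν).compLeft ι

variable {R ι} in
theorem toLaurentHom_of (ν : ℤ) (v : ι → R) :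
    toLaurentHom R ι (of _ ν v) = fun i => .single ν (v i) :=
  toAddMonoid_of _ _ _

variable [Fintype ι] [DecidableEq ι]

def ofLaurentHom : (ι → R[T;T⁻¹]) →+ ⨁ _ : ℤ, ι → R :=
  ∑ i, (Finsupp.liftAddHom fun ν => (of _ ν).comp (AddMonoidHom.single _ i)).comp
    (AddMonoidAlgebra.coeffAddEquiv.toAddMonoidHom.comp (Pi.evalAddMonoidHom _ i))

variable {R ι}

theorem ofLaurentHom_single (i : ι) (ν : ℤ) (r : R) :
    ofLaurentHom R ι (Pi.single i (.single ν r)) = of _ ν (Pi.single i r) := by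
  rw [ofLaurentHom, AddMonoidHom.finsetSum_apply, Finset.sum_eq_single i]
  · simp only [AddMonoidHom.comp_apply, Pi.evalAddMonoidHom_apply, Pi.single_eq_same,
      AddEquiv.coe_toAddMonoidHom, AddMonoidAlgebra.coeffAddEquiv_apply,
      AddMonoidAlgebra.coeff_single, Finsupp.liftAddHom_apply_single]
    rfl
  · intro j _ hj
    simp [Pi.single_eq_of_ne hj]
  · simp

theorem ofLaurentHom_comp_toLaurentHom :
    (ofLaurentHom R ι).comp (toLaurentHom R ι) = AddMonoidHom.id _ := by
  refine DirectSum.addHom_ext fun ν v => ?_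
  rw [AddMonoidHom.comp_apply, toLaurentHom_of,
    ← Finset.univ_sum_single (fun i => AddMonoidAlgebra.single ν (v i)), map_sum]
  simp only [ofLaurentHom_single]
  rw [← map_sum, Finset.univ_sum_single]
  rfl

theorem toLaurentHom_comp_ofLaurentHom :
    (toLaurentHom R ι).comp (ofLaurentHom R ι) = AddMonoidHom.id _ := by
  ext i ν r j : 4
  simp only [AddMonoidHom.comp_apply, AddMonoidAlgebra.singleAddHom_apply,
    AddMonoidHom.single_apply, ofLaurentHom_single, toLaurentHom_of, AddMonoidHom.id_apply]
  exact Pi.apply_single (fun _ : ι => (AddMonoidAlgebra.single ν : R → R[T;T⁻¹]))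
    (fun _ => AddMonoidAlgebra.single_zero _) i r j

variable (R ι) in
def laurentEquiv : (⨁ _ : ℤ, ι → R) ≃+ (ι → R[T;T⁻¹]) :=
  (toLaurentHom R ι).toAddEquiv (ofLaurentHom R ι)
    ofLaurentHom_comp_toLaurentHom toLaurentHom_comp_ofLaurentHom

theorem laurentEquiv_of (ν : ℤ) (v : ι → R) :
    laurentEquiv R ι (of _ ν v) = fun i => C (v i) * T ν :=
  funext fun i => congr_fun (toLaurentHom_of ν v) i ▸ single_eq_C_mul_T (v i) ν

theorem laurentEquiv_of_add_one (ν : ℤ) (v : ι → R) :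
    laurentEquiv R ι (of _ (ν + 1) v) = (T 1 : R[T;T⁻¹]) • laurentEquiv R ι (of _ ν v) := by
  funext i
  simp only [laurentEquiv_of, Pi.smul_apply, smul_eq_mul]
  rw [T_mul, T_add, mul_assoc]

end LaurentEquiv

section Presentation

variable {R ι κ : Type*} [Fintype ι] [DecidableEq ι] [Fintype κ] [DecidableEq κ]

theorem laurentEquiv_shiftHom [Ring R] (x : ⨁ _ : ℤ, ι → R) :
    laurentEquiv R ι (shiftHom _ x) = (T 1 : R[T;T⁻¹]) • laurentEquiv R ι x := by
  induction x using DirectSum.induction_on with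
  | zero => simp
  | of ν v => rw [shiftHom, toAddMonoid_of, laurentEquiv_of_add_one]
  | add x y hx hy => simp only [map_add, hx, hy, smul_add]

theorem laurentEquiv_of_mulVec [CommSemiring R] (A : Matrix κ ι R) (ν : ℤ) (v : ι → R) :
    laurentEquiv R κ (of _ ν (A *ᵥ v)) = A.map C *ᵥ laurentEquiv R ι (of _ ν v) := by
  funext i
  simp [laurentEquiv_of, Matrix.mulVec, dotProduct, Finset.sum_mul, mul_assoc]

theorem laurentEquiv_relatorHom [CommRing R] (F G : Matrix κ ι R) (x : ⨁ _ : ℤ, ι → R) :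
    laurentEquiv R κ (relatorHom F.mulVecLin.toAddMonoidHom G.mulVecLin.toAddMonoidHom x) =
      ((T 1 : R[T;T⁻¹]) • G.map C - F.map C) *ᵥ laurentEquiv R ι x := by
  induction x using DirectSum.induction_on with
  | zero => simp
  | of ν v =>
    simp only [relatorHom, toAddMonoid_of, AddMonoidHom.sub_apply, AddMonoidHom.comp_apply,
      LinearMap.toAddMonoidHom_coe, Matrix.mulVecLin_apply, map_sub, laurentEquiv_of_add_one,
      laurentEquiv_of_mulVec, Matrix.sub_mulVec, Matrix.smul_mulVec, Matrix.mulVec_smul]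
  | add x y hx hy => simp only [map_add, hx, hy, Matrix.mulVec_add]

theorem map_relS_laurentEquiv [CommRing R] (F G : Matrix κ ι R) :
    (relS F.mulVecLin.toAddMonoidHom G.mulVecLin.toAddMonoidHom).map (laurentEquiv R κ) =
      (LinearMap.range ((T 1 : R[T;T⁻¹]) • G.map C - F.map C).mulVecLin).toAddSubgroup := by
  have hcomm : (laurentEquiv R κ : _ →+ _).comp
      (relatorHom F.mulVecLin.toAddMonoidHom G.mulVecLin.toAddMonoidHom) =
      (((T 1 : R[T;T⁻¹]) • G.map C - F.map C).mulVecLin.toAddMonoidHom).comp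
        (laurentEquiv R ι) :=
    AddMonoidHom.ext (laurentEquiv_relatorHom F G)
  rw [relS_eq_range_relatorHom, AddMonoidHom.map_range, LinearMap.range_toAddSubgroup, hcomm,
    AddMonoidHom.range_comp, AddEquiv.range_eq_top, ← AddMonoidHom.range_eq_map]

end Presentation

theorem stmt5_general (d : ℕ) (F G : Matrix (Fin d) (Fin d) ℤ)
    (N : Submodule (LaurentPolynomial ℤ) (Fin d → LaurentPolynomial ℤ))
    (hN : N = Submodule.span (LaurentPolynomial ℤ)
      {v : Fin d → LaurentPolynomial ℤ | ∃ j : Fin d,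
        v = fun i => LaurentPolynomial.T 1 * (G i j : LaurentPolynomial ℤ)
          - (F i j : LaurentPolynomial ℤ)}) :
    ∃ ψ : ((Fin d → LaurentPolynomial ℤ) ⧸ N) ≃+
        P F.mulVecLin.toAddMonoidHom G.mulVecLin.toAddMonoidHom,
      ∀ x : (Fin d → LaurentPolynomial ℤ) ⧸ N,
        ψ ((LaurentPolynomial.T 1 : LaurentPolynomial ℤ) • x) =
          shiftMu F.mulVecLin.toAddMonoidHom G.mulVecLin.toAddMonoidHom (ψ x) := by
  set M : Matrix (Fin d) (Fin d) ℤ[T;T⁻¹] := (T 1 : ℤ[T;T⁻¹]) • G.map C - F.map C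
  have hcol : M.col = fun j i => T 1 * (G i j : ℤ[T;T⁻¹]) - (F i j : ℤ[T;T⁻¹]) := by
    ext j i
    simp [M, eq_intCast]
  have hNM : N = LinearMap.range M.mulVecLin := by
    rw [hN, Matrix.range_mulVecLin, hcol]
    congr 1
    ext v
    simp [eq_comm]
  let e := laurentEquiv ℤ (Fin d)
  have hmap : (relS F.mulVecLin.toAddMonoidHom G.mulVecLin.toAddMonoidHom).map (e : _ →+ _) =
      N.toAddSubgroup := hNM ▸ map_relS_laurentEquiv F G
  let ψ : ((Fin d → ℤ[T;T⁻¹]) ⧸ N) ≃+ P F.mulVecLin.toAddMonoidHom G.mulVecLin.toAddMonoidHom :=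
    QuotientAddGroup.congr N.toAddSubgroup _ e.symm ((AddSubgroup.map_symm_eq_iff_map_eq _).2 hmap)
  refine ⟨ψ, fun x => ?_⟩
  obtain ⟨y, rfl⟩ := Submodule.Quotient.mk_surjective N x
  rw [← Submodule.Quotient.mk_smul]
  refine congrArg QuotientAddGroup.mk (e.symm_apply_eq.mpr ?_)
  rw [laurentEquiv_shiftHom]
  exact congrArg _ (e.apply_symm_apply y).symm

/-- If `f, g : ℤ^d → ℤ^d` are injective linear maps with matrices `F` and `G`, and
`N ⊆ Λ^d` is the `Λ = ℤ[t,t⁻¹]`-submodule generated by the columns of `t•G - F`, then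
`Λ^d / N` is additively isomorphic to the infinite amalgamated product `P(f,g)`, with
multiplication by `t` corresponding to the shift `μ`; that is, `P(f,g)` is a `Λ`-module
with square presentation matrix `t•G - F`. -/
theorem stmt5 (d : ℕ) (F G : Matrix (Fin d) (Fin d) ℤ)
    (hf : Function.Injective F.mulVecLin) (hg : Function.Injective G.mulVecLin)
    (N : Submodule (LaurentPolynomial ℤ) (Fin d → LaurentPolynomial ℤ))
    (hN : N = Submodule.span (LaurentPolynomial ℤ)
      {v : Fin d → LaurentPolynomial ℤ | ∃ j : Fin d,
        v = fun i => LaurentPolynomial.T 1 * (G i j : LaurentPolynomial ℤ)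
          - (F i j : LaurentPolynomial ℤ)}) :
    ∃ ψ : ((Fin d → LaurentPolynomial ℤ) ⧸ N) ≃+
        P F.mulVecLin.toAddMonoidHom G.mulVecLin.toAddMonoidHom,
      ∀ x : (Fin d → LaurentPolynomial ℤ) ⧸ N,
        ψ ((LaurentPolynomial.T 1 : LaurentPolynomial ℤ) • x) =
          shiftMu F.mulVecLin.toAddMonoidHom G.mulVecLin.toAddMonoidHom (ψ x) :=
  stmt5_general d F G N hN
end
end

section
/- Let R be a commutative ring and let 0 → N → M → M″ → 0 be a short exact sequence of R-modules. Suppose N is isomorphic to R^a / im(A) for an a × a matrix A over R, and M″ is isomorphic to R^c / im(C) for a c × c matrix C over R (matrices acting by multiplication on column vectors). Then there exists an a × c matrix D over R such that M is isomorphic to R^{a+c} / im(B), where B is the block upper-triangular matrix with diagonal blocks A and C and off-diagonal block D; in particular M has a square presentation matrix B with det B = det A · det C. -/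
/-!
Lift the generators of `M''` to `M` by a map `g : R^c → M`. Each relation of `M''` (a column of
`C`) then maps under `g` into `ker π = ι N`, so it is the negated image of a vector of `R^a`;
these vectors are the columns of `D`. The generators of `ι N` and the lifted generators of `M''`
together give a map `R^(a+c) → M`, and a diagram chase shows that it is surjective with kernel
the column span of `[A D; 0 C]`.
-/

open LinearMap
open scoped Matrix

theorem Module.Projective.exists_comp_eq_of_range_le {R P X Y : Type*} [CommRing R]
    [AddCommGroup P] [AddCommGroup X] [AddCommGroup Y] [Module R P] [Module R X] [Module R Y]
    [Module.Projective R P] (f : X →ₗ[R] Y) (g : P →ₗ[R] Y) (h : range g ≤ range f) :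
    ∃ k : P →ₗ[R] X, f ∘ₗ k = g := by
  obtain ⟨k, hk⟩ := Module.projective_lifting_property f.rangeRestrict
    (g.codRestrict (range f) fun x => h ⟨x, rfl⟩) f.surjective_rangeRestrict
  exact ⟨k, by simpa using congr_arg ((range f).subtype ∘ₗ ·) hk⟩

section BlockPresentation

variable {R M M'' : Type*} [CommRing R] [AddCommGroup M] [AddCommGroup M''] [Module R M]
  [Module R M''] {α α' γ γ' : Type*} [Fintype α'] [Fintype γ']

def sumArrowCoprod (f : (α → R) →ₗ[R] M) (g : (γ → R) →ₗ[R] M) : (α ⊕ γ → R) →ₗ[R] M :=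
  f ∘ₗ funLeft R R Sum.inl + g ∘ₗ funLeft R R Sum.inr

theorem sumArrowCoprod_apply (f : (α → R) →ₗ[R] M) (g : (γ → R) →ₗ[R] M) (x : α ⊕ γ → R) :
    sumArrowCoprod f g x = f (x ∘ Sum.inl) + g (x ∘ Sum.inr) := rfl

variable {f : (α → R) →ₗ[R] M} {g : (γ → R) →ₗ[R] M} {π : M →ₗ[R] M''}
  {A : Matrix α α' R} {C : Matrix γ γ' R} {D : Matrix α γ' R}

theorem sumArrowCoprod_surjective (hf : range f = ker π) (hg : Function.Surjective (π ∘ₗ g)) :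
    Function.Surjective (sumArrowCoprod f g) := by
  intro u
  obtain ⟨y, hy⟩ := hg (π u)
  obtain ⟨z, hz⟩ : u - g y ∈ range f := by
    rw [hf, mem_ker, map_sub, sub_eq_zero, ← hy, comp_apply]
  exact ⟨Sum.elim z y, by simp [sumArrowCoprod_apply, hz]⟩

theorem range_fromBlocks_le_ker_sumArrowCoprod (hA : range A.mulVecLin ≤ ker f)
    (hD : f ∘ₗ D.mulVecLin = -(g ∘ₗ C.mulVecLin)) :
    range (Matrix.fromBlocks A D 0 C).mulVecLin ≤ ker (sumArrowCoprod f g) := by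
  rintro _ ⟨x, rfl⟩
  have hAx : f (A *ᵥ (x ∘ Sum.inl)) = 0 := hA ⟨_, rfl⟩
  have hDx := congr($hD (x ∘ Sum.inr))
  simp only [comp_apply, LinearMap.neg_apply, Matrix.mulVecLin_apply] at hDx
  simp [sumArrowCoprod_apply, Matrix.fromBlocks_mulVec, hAx, hDx]

theorem ker_sumArrowCoprod_le_range_fromBlocks (hA : ker f ≤ range A.mulVecLin)
    (hC : ker (π ∘ₗ g) ≤ range C.mulVecLin) (hπf : π ∘ₗ f = 0)
    (hD : f ∘ₗ D.mulVecLin = -(g ∘ₗ C.mulVecLin)) :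
    ker (sumArrowCoprod f g) ≤ range (Matrix.fromBlocks A D 0 C).mulVecLin := by
  intro x hx
  rw [mem_ker, sumArrowCoprod_apply] at hx
  obtain ⟨z, hz⟩ : x ∘ Sum.inr ∈ range C.mulVecLin := hC <| by
    have := congr(π $hx)
    rw [map_add, ← comp_apply π f, hπf] at this
    simpa using this
  obtain ⟨w, hw⟩ : x ∘ Sum.inl - D *ᵥ z ∈ range A.mulVecLin := hA <| by
    have hDz := congr($hD z)
    simp only [comp_apply, LinearMap.neg_apply, Matrix.mulVecLin_apply] at hDz hz
    rw [mem_ker, map_sub, hDz, hz, sub_neg_eq_add, hx]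
  refine ⟨Sum.elim w z, funext fun i => ?_⟩
  simp only [Matrix.mulVecLin_apply] at hw hz ⊢
  rcases i with i | i
  · simp [Matrix.fromBlocks_mulVec, congr_fun hw i]
  · simpa [Matrix.fromBlocks_mulVec] using congr_fun hz i

end BlockPresentation

section

variable {R N M M'' : Type*} [CommRing R] [AddCommGroup N] [AddCommGroup M] [AddCommGroup M'']
  [Module R N] [Module R M] [Module R M''] {α α' γ γ' : Type*} [Fintype α'] [Finite γ]
  [Fintype γ']

theorem exists_fromBlocks_presentation_of_exact (ι : N →ₗ[R] M) (π : M →ₗ[R] M'')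
    (hι : Function.Injective ι) (hπ : Function.Surjective π) (hexact : range ι = ker π)
    {A : Matrix α α' R} {C : Matrix γ γ' R} (pA : (α → R) →ₗ[R] N) (pC : (γ → R) →ₗ[R] M'')
    (hpA : Function.Surjective pA) (hpC : Function.Surjective pC)
    (hpA_ker : ker pA = range A.mulVecLin) (hpC_ker : ker pC = range C.mulVecLin) :
    ∃ (D : Matrix α γ' R) (φ : (α ⊕ γ → R) →ₗ[R] M),
      Function.Surjective φ ∧ ker φ = range (Matrix.fromBlocks A D 0 C).mulVecLin := by
  classical
  set f := ι ∘ₗ pA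
  have hf : range f = ker π := by rw [range_comp_of_range_eq_top ι (range_eq_top.2 hpA), hexact]
  have hf_ker : ker f = range A.mulVecLin := by
    rw [ker_comp_of_ker_eq_bot pA (ker_eq_bot.2 hι), hpA_ker]
  obtain ⟨g, hg⟩ := Module.projective_lifting_property π pC hπ
  obtain ⟨E, hE⟩ := Module.Projective.exists_comp_eq_of_range_le f (-(g ∘ₗ C.mulVecLin)) <| by
    rintro _ ⟨z, rfl⟩
    rw [hf, mem_ker, LinearMap.neg_apply, map_neg, comp_apply, ← comp_apply π g, hg, neg_eq_zero,
      ← mem_ker, hpC_ker]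
    exact ⟨z, rfl⟩
  have hD : f ∘ₗ (LinearMap.toMatrix' E).mulVecLin = -(g ∘ₗ C.mulVecLin) := by
    rw [← Matrix.toLin'_apply', Matrix.toLin'_toMatrix', hE]
  have hπf : π ∘ₗ f = 0 := by
    ext x
    exact hexact.le ⟨pA x, rfl⟩
  refine ⟨LinearMap.toMatrix' E, sumArrowCoprod f g, sumArrowCoprod_surjective hf (hg ▸ hpC),
    le_antisymm ?_ ?_⟩
  · exact ker_sumArrowCoprod_le_range_fromBlocks hf_ker.le (hg ▸ hpC_ker).le hπf hD
  · exact range_fromBlocks_le_ker_sumArrowCoprod hf_ker.ge hD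

end

/-- Given a short exact sequence `0 → N → M → M″ → 0` of `R`-modules, where `N` has
square presentation matrix `A` and `M″` has square presentation matrix `C`, the module
`M` has a square presentation matrix of block upper-triangular form `[A D; 0 C]` for
some matrix `D`; in particular its determinant is `det A * det C`. -/
theorem stmt7 {R : Type*} [CommRing R]
    {N M M'' : Type*} [AddCommGroup N] [AddCommGroup M] [AddCommGroup M'']
    [Module R N] [Module R M] [Module R M'']
    (ι : N →ₗ[R] M) (π : M →ₗ[R] M'')
    (hι : Function.Injective ι) (hπ : Function.Surjective π)
    (hexact : LinearMap.range ι = LinearMap.ker π)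
    {a c : ℕ} (A : Matrix (Fin a) (Fin a) R) (C : Matrix (Fin c) (Fin c) R)
    (eN : N ≃ₗ[R] ((Fin a → R) ⧸ LinearMap.range A.mulVecLin))
    (eM'' : M'' ≃ₗ[R] ((Fin c → R) ⧸ LinearMap.range C.mulVecLin)) :
    ∃ D : Matrix (Fin a) (Fin c) R,
      Nonempty (M ≃ₗ[R]
        (((Fin a ⊕ Fin c) → R) ⧸
          LinearMap.range (Matrix.fromBlocks A D 0 C).mulVecLin)) ∧
      (Matrix.fromBlocks A D 0 C).det = A.det * C.det := by
  obtain ⟨D, φ, hφ, hker⟩ := exists_fromBlocks_presentation_of_exact ι π hι hπ hexact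
    (eN.symm.toLinearMap ∘ₗ Submodule.mkQ _) (eM''.symm.toLinearMap ∘ₗ Submodule.mkQ _)
    (eN.symm.surjective.comp (Submodule.mkQ_surjective _))
    (eM''.symm.surjective.comp (Submodule.mkQ_surjective _))
    (by rw [LinearEquiv.ker_comp, Submodule.ker_mkQ])
    (by rw [LinearEquiv.ker_comp, Submodule.ker_mkQ])
  refine ⟨D, ⟨?_⟩, Matrix.det_fromBlocks_zero₂₁ A D C⟩
  exact (φ.quotKerEquivOfSurjective hφ).symm.trans (Submodule.quotEquivOfEq _ _ hker)
end

section
/- Let R be a commutative integral domain and let A : R^r → R^s be an R-linear map with r < s. Then the quotient module R^s / im(A) is not a torsion module: there exists an element m ∈ R^s / im(A) with m ≠ 0 such that c · m ≠ 0 for every nonzero c ∈ R. -/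
/-!
Over a domain, rank is additive along `0 → im A → R^s → coker A → 0` and torsion modules have
rank zero. So if `coker A` were torsion, `im A` would have rank `s`, while as an image of `R^r`
it has rank at most `r < s`.
-/

universe u v w

theorem lift_rank_le_of_isTorsion_quotient_range {R : Type u} {M : Type v} {N : Type w}
    [CommRing R] [IsDomain R] [AddCommGroup M] [Module R M] [AddCommGroup N] [Module R N]
    (f : M →ₗ[R] N) (htor : Module.IsTorsion R (N ⧸ LinearMap.range f)) :
    Cardinal.lift.{v} (Module.rank R N) ≤ Cardinal.lift.{w} (Module.rank R M) := by
  have hrange : Module.rank R (LinearMap.range f) = Module.rank R N := by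
    rw [← rank_quotient_add_rank_of_isDomain (LinearMap.range f),
      Module.rank_eq_zero_iff_isTorsion.mpr htor, zero_add]
  exact hrange ▸ lift_rank_range_le f

theorem exists_ne_zero_forall_smul_ne_zero_of_not_isTorsion {R M : Type*} [CommRing R]
    [IsDomain R] [AddCommGroup M] [Module R M] (h : ¬ Module.IsTorsion R M) :
    ∃ m : M, m ≠ 0 ∧ ∀ c : R, c ≠ 0 → c • m ≠ 0 := by
  simp only [Module.IsTorsion, not_forall, not_exists] at h
  obtain ⟨m, hm⟩ := h
  exact ⟨m, fun h0 => hm 1 (by simp [h0]), fun c hc => hm ⟨c, mem_nonZeroDivisors_of_ne_zero hc⟩⟩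

/-- Over a commutative integral domain `R`, the cokernel of a linear map
`A : R^r → R^s` with `r < s` is not a torsion module: it contains a nonzero element
that is not annihilated by any nonzero element of `R`. -/
theorem stmt10 {R : Type*} [CommRing R] [IsDomain R] {r s : ℕ} (hrs : r < s)
    (A : (Fin r → R) →ₗ[R] (Fin s → R)) :
    ∃ m : (Fin s → R) ⧸ LinearMap.range A,
      m ≠ 0 ∧ ∀ c : R, c ≠ 0 → c • m ≠ 0 := by
  refine exists_ne_zero_forall_smul_ne_zero_of_not_isTorsion fun htor => ?_
  have hsr := lift_rank_le_of_isTorsion_quotient_range A htor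
  simp only [Cardinal.lift_id, rank_fun', Fintype.card_fin, Nat.cast_le] at hsr
  omega
end
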